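/- The series Σ_{n≥1} n · φ²_{n,0} · (2/27)^n converges and its sum equals 3/8; explicitly, Σ_{n≥1} n · (2^{n+1}(3n)! / (n!(2n+2)!)) · (2/27)^n = 3/8. (Equivalently, since Z²_0 = Σ_n φ²_{n,0}(2/27)^n = 9/8, the expected number of internal vertices of a free type II triangulation of a 2-gon is 1/3.) -/

import Mathlib

/-!
Let `b n = C(3n, n) (4/27)^n` and let `g n = b n / (2n + 1)` be the number of ternary trees
with `n` internal nodes weighted by `(4/27)^n`. The summand `t n` satisfies
`4 t n + 5 g n = 9 (b n - b (n + 1))`, and `b n → 0` since `b n ^ 2 (n + 1) ≤ 1`, so the right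
side sums to `9`. The generating function `T` of ternary trees satisfies `T = 1 + x T³`; at the
critical point `x = 4/27` this cubic has the double root `T = 3/2`. Hence `4 ∑ t = 9 - 5 · 3/2`.
-/

/-- The number of rooted type II triangulations of a 2-gon with n internal
vertices: φ²_{n,0} = 2^{n+1}(3n)!/(n!(2n+2)!). -/
noncomputable def phi20 (n : ℕ) : ℝ :=
  (2 ^ (n + 1) * Nat.factorial (3 * n) : ℝ) /
    (Nat.factorial n * Nat.factorial (2 * n + 2))

open Finset Filter Topology

/-- `raney n r` counts forests of `r` ternary trees with `n` internal nodes in total; the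
recursion distinguishes whether the first tree is a leaf or has three subtrees. -/
def raney : ℕ → ℕ → ℕ
  | 0, _ => 1
  | _ + 1, 0 => 0
  | n + 1, r + 1 => raney (n + 1) r + raney n (r + 3)

@[simp] lemma raney_zero_left (r : ℕ) : raney 0 r = 1 := by cases r <;> simp [raney]

@[simp] lemma raney_succ_zero (n : ℕ) : raney (n + 1) 0 = 0 := by simp [raney]

lemma raney_succ_succ (n r : ℕ) : raney (n + 1) (r + 1) = raney (n + 1) r + raney n (r + 3) := by
  simp [raney]

lemma raney_succ_one (n : ℕ) : raney (n + 1) 1 = raney n 3 := by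
  simp [raney_succ_succ]

lemma sum_range_raney_mul_raney (s n r : ℕ) :
    ∑ k ∈ range (n + 1), raney k r * raney (n - k) s = raney n (r + s) := by
  induction n using Nat.strong_induction_on generalizing r with
  | _ n ihn =>
  induction r with
  | zero =>
    rw [sum_eq_single 0
      (fun k _ hk => by obtain ⟨k, rfl⟩ := Nat.exists_eq_succ_of_ne_zero hk; simp) (by simp)]
    simp
  | succ r ihr =>
    cases n with
    | zero => simp
    | succ n =>
      have hfirst : ∑ k ∈ range (n + 1), raney (k + 1) r * raney (n - k) s + raney (n + 1) s
          = raney (n + 1) (r + s) := by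
        simpa [sum_range_succ'] using ihr
      rw [sum_range_succ']
      simp only [raney_succ_succ, Nat.succ_sub_succ, add_mul, sum_add_distrib, raney_zero_left,
        one_mul, Nat.sub_zero]
      rw [ihn n n.lt_succ_self (r + 3), add_right_comm, hfirst,
        show r + 3 + s = r + s + 3 by ring, ← raney_succ_succ, show r + s + 1 = r + 1 + s by ring]

lemma raney_mul_eq_choose (n r : ℕ) : (3 * n + r) * raney n r = r * (3 * n + r).choose n := by
  induction n generalizing r with
  | zero => simp
  | succ n ihn =>
    induction r with
    | zero => simp
    | succ r hleaf =>
      have hpascal := Nat.choose_succ_succ (3 * n + r + 3) n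
      have hratio := Nat.choose_succ_right_eq (3 * n + r + 3) n
      have hnode := ihn (r + 3)
      rw [show 3 * n + r + 3 - n = 2 * n + r + 3 by omega] at hratio
      rw [show 3 * (n + 1) + r = 3 * n + r + 3 by ring] at hleaf
      rw [show 3 * n + (r + 3) = 3 * n + r + 3 by ring] at hnode
      rw [show 3 * (n + 1) + (r + 1) = 3 * n + r + 3 + 1 by ring, raney_succ_succ, hpascal]
      have hne : ((3 * n + r + 3) * (n + 1) : ℚ) ≠ 0 := by positivity
      qify at hleaf hnode hratio ⊢
      apply mul_left_cancel₀ hne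
      linear_combination ((3 * n + r + 4) * (n + 1) : ℚ) * (hleaf + hnode)
        + (r - (3 * n + r + 3) : ℚ) * hratio

noncomputable def raneySeries (r : ℕ) (x : ℝ) (n : ℕ) : ℝ := raney n r * x ^ n

lemma raneySeries_nonneg {x : ℝ} (hx : 0 ≤ x) (r n : ℕ) : 0 ≤ raneySeries r x n := by
  unfold raneySeries; positivity

lemma sum_range_raneySeries_mul (r s : ℕ) (x : ℝ) (n : ℕ) :
    ∑ k ∈ range (n + 1), raneySeries r x k * raneySeries s x (n - k) =
      raneySeries (r + s) x n := by
  simp only [raneySeries, ← sum_range_raney_mul_raney s n r, Nat.cast_sum, Nat.cast_mul, sum_mul]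
  refine sum_congr rfl fun k hk => ?_
  rw [← pow_mul_pow_sub x (Nat.lt_succ_iff.mp (mem_range.mp hk))]
  ring

lemma HasSum.raneySeries_add {x a b : ℝ} {r s : ℕ} (hx : 0 ≤ x)
    (ha : HasSum (raneySeries r x) a) (hb : HasSum (raneySeries s x) b) :
    HasSum (raneySeries (r + s) x) (a * b) := by
  have hnorm : ∀ {t}, Summable (raneySeries t x) → Summable fun n => ‖raneySeries t x n‖ :=
    fun h => h.congr fun n => (Real.norm_of_nonneg (raneySeries_nonneg hx _ n)).symm
  have hprod :=
    summable_norm_sum_mul_range_of_summable_norm (hnorm ha.summable) (hnorm hb.summable)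
  simp only [sum_range_raneySeries_mul] at hprod
  have hsum := tsum_mul_tsum_eq_tsum_sum_range_of_summable_norm (hnorm ha.summable)
    (hnorm hb.summable)
  simp only [sum_range_raneySeries_mul, ha.tsum_eq, hb.tsum_eq] at hsum
  exact hsum ▸ hprod.of_norm.hasSum

lemma HasSum.raneySeries_one_eq {x T : ℝ} (hx : 0 ≤ x) (hT : HasSum (raneySeries 1 x) T) :
    T = 1 + x * T ^ 3 := by
  have hcube : HasSum (raneySeries 3 x) (T ^ 3) := by
    simpa [pow_three, mul_assoc] using ((hT.raneySeries_add hx hT).raneySeries_add hx hT)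
  have hshift : HasSum (fun n => x * raneySeries 3 x n) (T - 1) := by
    have := (hasSum_nat_add_iff' 1).mpr hT
    simp only [raneySeries, raney_succ_one, range_one, sum_singleton, raney_zero_left] at this
    simpa [raneySeries, pow_succ, mul_comm, mul_left_comm, mul_assoc] using this
  linarith [(hcube.mul_left x).unique hshift]

noncomputable def choose3Term (n : ℕ) : ℝ := (3 * n).choose n * (4 / 27) ^ n

lemma choose3Term_nonneg (n : ℕ) : 0 ≤ choose3Term n := by unfold choose3Term; positivity

lemma choose3Term_zero : choose3Term 0 = 1 := by simp [choose3Term]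

lemma choose3Term_succ (n : ℕ) :
    9 * (n + 1) * (2 * n + 1) * choose3Term (n + 1) =
      2 * (3 * n + 1) * (3 * n + 2) * choose3Term n := by
  have hC3 : (3 * (n + 1)).choose (n + 1) = 3 * (3 * n + 2).choose n := by
    apply Nat.eq_of_mul_eq_mul_right (by omega : 0 < n + 1)
    rw [show 3 * (n + 1) = 3 * n + 2 + 1 by ring, ← Nat.add_one_mul_choose_eq]
    ring
  have hC2 := Nat.choose_mul_succ_eq (3 * n + 1) n
  have hC1 := Nat.choose_mul_succ_eq (3 * n) n
  rw [show 3 * n + 1 + 1 - n = 2 * n + 2 by omega, show 3 * n + 1 + 1 = 3 * n + 2 by ring] at hC2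
  rw [show 3 * n + 1 - n = 2 * n + 1 by omega] at hC1
  unfold choose3Term
  rw [hC3, pow_succ]
  rify at hC2 hC1
  push_cast
  linear_combination (-2 * (2 * n + 1) * (4 / 27 : ℝ) ^ n) * hC2
    - 2 * (3 * n + 2) * (4 / 27 : ℝ) ^ n * hC1

lemma phi20_mul (n : ℕ) :
    phi20 n * ((2 * n + 1) * (2 * n + 2)) = 2 ^ (n + 1) * (3 * n).choose n := by
  have hfact := Nat.add_choose_mul_factorial_mul_factorial (2 * n) n
  rw [show 2 * n + n = 3 * n by ring] at hfact
  have h2 : (2 * n + 2).factorial = (2 * n + 2) * (2 * n + 1) * (2 * n).factorial := by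
    simp [Nat.factorial_succ]; ring
  unfold phi20
  rw [← hfact, h2]
  push_cast
  field_simp

lemma two_mul_add_one_mul_raney_one (n : ℕ) : (2 * n + 1) * raney n 1 = (3 * n).choose n := by
  have hclosed := raney_mul_eq_choose n 1
  have hC1 := Nat.choose_mul_succ_eq (3 * n) n
  rw [show 3 * n + 1 - n = 2 * n + 1 by omega] at hC1
  apply Nat.eq_of_mul_eq_mul_left (by omega : 0 < 3 * n + 1)
  calc (3 * n + 1) * ((2 * n + 1) * raney n 1) = (2 * n + 1) * ((3 * n + 1) * raney n 1) := by ring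
    _ = (3 * n + 1) * (3 * n).choose n := by rw [hclosed]; linarith

lemma two_mul_add_one_mul_raneySeries_one (n : ℕ) :
    (2 * n + 1) * raneySeries 1 (4 / 27) n = choose3Term n := by
  unfold raneySeries choose3Term
  rw [← two_mul_add_one_mul_raney_one]
  push_cast
  ring

lemma summand_nonneg (n : ℕ) : 0 ≤ n * phi20 n * (2 / 27) ^ n := by
  unfold phi20; positivity

lemma summand_mul (n : ℕ) :
    (n + 1) * (2 * n + 1) * (n * phi20 n * (2 / 27) ^ n) = n * choose3Term n := by
  have hpow : (4 / 27 : ℝ) ^ n = 2 ^ n * (2 / 27) ^ n := by rw [← mul_pow]; norm_num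
  unfold choose3Term
  rw [hpow]
  linear_combination (n * (2 / 27 : ℝ) ^ n / 2) * phi20_mul n

lemma summand_telescope (n : ℕ) :
    4 * (n * phi20 n * (2 / 27) ^ n) + 5 * raneySeries 1 (4 / 27) n =
      9 * (choose3Term n - choose3Term (n + 1)) := by
  have hne : ((n + 1) * (2 * n + 1) : ℝ) ≠ 0 := by positivity
  apply mul_left_cancel₀ hne
  linear_combination 4 * summand_mul n + 5 * (n + 1) * two_mul_add_one_mul_raneySeries_one n
    + choose3Term_succ n

lemma choose3Term_antitone : Antitone choose3Term := by
  refine antitone_nat_of_succ_le fun n => ?_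
  have hg := raneySeries_nonneg (by norm_num : (0 : ℝ) ≤ 4 / 27) 1 n
  linarith [summand_telescope n, summand_nonneg n]

lemma choose3Term_sq_mul_le (n : ℕ) : choose3Term n ^ 2 * (n + 1) ≤ 1 := by
  induction n with
  | zero => simp [choose3Term_zero]
  | succ n ih =>
    set D : ℝ := 9 * (n + 1) * (2 * n + 1)
    set P : ℝ := 2 * (3 * n + 1) * (3 * n + 2)
    have hn : (0 : ℝ) ≤ n := n.cast_nonneg
    have hpoly : P ^ 2 * (n + 2) ≤ D ^ 2 * (n + 1) := by
      nlinarith [mul_nonneg hn hn, mul_nonneg (mul_nonneg hn hn) hn]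
    have hD : 0 < D ^ 2 := by positivity
    refine le_of_mul_le_mul_left ?_ hD
    push_cast
    calc D ^ 2 * (choose3Term (n + 1) ^ 2 * (n + 1 + 1))
        = (P * choose3Term n) ^ 2 * (n + 2) := by rw [← choose3Term_succ]; ring
      _ = choose3Term n ^ 2 * (P ^ 2 * (n + 2)) := by ring
      _ ≤ choose3Term n ^ 2 * (D ^ 2 * (n + 1)) := by gcongr
      _ = D ^ 2 * (choose3Term n ^ 2 * (n + 1)) := by ring
      _ ≤ D ^ 2 * 1 := by gcongr

lemma tendsto_choose3Term : Tendsto choose3Term atTop (𝓝 0) := by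
  have hsq : Tendsto (fun n => choose3Term n ^ 2) atTop (𝓝 0) :=
    squeeze_zero (fun n => sq_nonneg _)
      (fun n => (le_div_iff₀ (by positivity)).mpr (choose3Term_sq_mul_le n))
      tendsto_one_div_add_atTop_nhds_zero_nat
  simpa [Real.sqrt_sq (choose3Term_nonneg _)] using hsq.sqrt

lemma hasSum_sub_succ_of_antitone {f : ℕ → ℝ} {l : ℝ} (hf : Antitone f)
    (hl : Tendsto f atTop (𝓝 l)) : HasSum (fun n => f n - f (n + 1)) (f 0 - l) := by
  rw [hasSum_iff_tendsto_nat_of_nonneg fun n => sub_nonneg.mpr (hf n.le_succ)]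
  simpa only [sum_range_sub'] using hl.const_sub (f 0)

lemma hasSum_choose3Term_sub : HasSum (fun n => choose3Term n - choose3Term (n + 1)) 1 := by
  simpa [choose3Term_zero] using
    hasSum_sub_succ_of_antitone choose3Term_antitone tendsto_choose3Term

lemma hasSum_raneySeries_one_four_div_27 : HasSum (raneySeries 1 (4 / 27)) (3 / 2) := by
  have hx : (0 : ℝ) ≤ 4 / 27 := by norm_num
  have hsummable : Summable (raneySeries 1 (4 / 27)) :=
    (hasSum_choose3Term_sub.summable.mul_left 9).of_nonneg_of_le (raneySeries_nonneg hx 1)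
      fun n => by linarith [summand_telescope n, summand_nonneg n, raneySeries_nonneg hx 1 n]
  set T := ∑' n, raneySeries 1 (4 / 27) n
  have hT : 0 ≤ T := tsum_nonneg (raneySeries_nonneg hx 1)
  have hcubic : (2 * T - 3) ^ 2 * (T + 3) = 0 := by
    linear_combination (-27) * hsummable.hasSum.raneySeries_one_eq hx
  have hdouble : (2 * T - 3) ^ 2 = 0 := (mul_eq_zero.mp hcubic).resolve_right (by linarith)
  have hT32 := pow_eq_zero_iff two_ne_zero |>.mp hdouble
  rw [show (3 / 2 : ℝ) = T by linarith]
  exact hsummable.hasSum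

/-- Σ_{n≥1} n · φ²_{n,0} · (2/27)^n = 3/8.  (The n = 0 term of the
series below vanishes, so summing over all n ≥ 0 is the same as over n ≥ 1.) -/
theorem expected_size_two_gon :
    HasSum (fun n : ℕ => (n : ℝ) * phi20 n * (2 / 27 : ℝ) ^ n) (3 / 8) := by
  have hterm (n : ℕ) : 4 * (n * phi20 n * (2 / 27 : ℝ) ^ n) =
      9 * (choose3Term n - choose3Term (n + 1)) - 5 * raneySeries 1 (4 / 27) n := by
    linarith [summand_telescope n]
  have h4 : HasSum (fun n : ℕ => 4 * (n * phi20 n * (2 / 27 : ℝ) ^ n)) (4 * (3 / 8)) := by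
    rw [show (4 * (3 / 8) : ℝ) = 9 * 1 - 5 * (3 / 2) by norm_num]
    simp_rw [hterm]
    exact (hasSum_choose3Term_sub.mul_left 9).sub (hasSum_raneySeries_one_four_div_27.mul_left 5)
  exact (hasSum_mul_left_iff four_ne_zero).mp h4
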